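/- Let $N \geq 1$, set $n = N+1$, let $s \neq 0$ be a complex number with $\operatorname{Re}(s) \geq 0$, let $\tau^f_i, \tau^b_i, \tau_i \geq 0$ ($i = 1, \ldots, N$) be real delays with $T^f = \mathrm{diag}(\tau^f_i)$, $T^b = \mathrm{diag}(\tau^b_i)$, $T = \mathrm{diag}(\tau_i)$, let $P \in \mathbb{C}^{n \times n}$ be Hermitian positive semidefinite, and let $Q_0^f, Q_0^b, Q_0, Q_1^f, Q_1^b, Q_1 \in \mathbb{C}^{N \times N}$ be diagonal matrices with nonnegative real diagonal entries. Define the block-diagonal uncertainty $\nabla = \mathrm{Diag}\big(s^{-1} I_n, \mathcal{D}_{\tau^f}, \mathcal{D}_{\tau^b}, \mathcal{D}_{\tau}, \mathcal{I}_{\tau^f}, \mathcal{I}_{\tau^b}, \mathcal{I}_{\tau}\big)$ where $\mathcal{D}_\Diamond = \mathrm{diag}(e^{-\Diamond_1 s}, \ldots, e^{-\Diamond_N s})$ and $\mathcal{I}_\Diamond = \mathrm{diag}\big(\frac{1-e^{-\Diamond_1 s}}{s}, \ldots, \frac{1-e^{-\Diamond_N s}}{s}\big)$, and the Hermitian separator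 $\Theta = \begin{pmatrix} \Theta_{11} & \Theta_{12} \\ \Theta_{12}^* & \Theta_{22} \end{pmatrix}$ with $\Theta_{11} = \mathrm{Diag}\big(0_n, -Q_0^f, -Q_0^b, -Q_0, -Q_1^f (T^f)^2, -Q_1^b (T^b)^2, -Q_1 T^2\big)$, $\Theta_{12} = \mathrm{Diag}(-P, 0_{6N})$, $\Theta_{22} = \mathrm{Diag}\big(0_n, Q_0^f, Q_0^b, Q_0, Q_1^f, Q_1^b, Q_1\big)$. Then $\begin{pmatrix} I \\ \nabla \end{pmatrix}^* \Theta \begin{pmatrix} I \\ \nabla \end{pmatrix}$ is negative semidefinite. -/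

import Mathlib

open Matrix ComplexOrder

/-!
Writing `J = [I; ∇]`, the form splits as
`Jᴴ Θ J = Θ₁₁ + Θ₁₂ ∇ + (Θ₁₂ ∇)ᴴ + ∇ᴴ Θ₂₂ ∇`.
The cross term lives on the integrator block, where it equals `-2 Re(s⁻¹) P ≤ 0`.
The rest is diagonal with entries `q (B² - |e|²)`, where `|e^{-τs}| ≤ 1 = B` and
`|(1 - e^{-τs})/s| = |∫₀^τ e^{-xs} dx| ≤ τ = B` on the closed right half-plane.
-/

/-- Index type for the delay-dependent augmented uncertainty: integrator block of size
`N+1` followed by the six delay-related blocks of size `N`. -/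
abbrev DdIdx (N : ℕ) : Type :=
  Fin (N + 1) ⊕ (Fin N ⊕ Fin N ⊕ Fin N ⊕ Fin N ⊕ Fin N ⊕ Fin N)

namespace Complex

lemma norm_exp_neg_ofReal_mul_le_one {s : ℂ} (hs : 0 ≤ s.re) {t : ℝ} (ht : 0 ≤ t) :
    ‖exp (-(t : ℂ) * s)‖ ≤ 1 := by
  rw [norm_exp, Real.exp_le_one_iff]
  simpa using mul_nonneg ht hs

lemma integral_exp_neg_mul_ofReal {s : ℂ} (hs : s ≠ 0) (t : ℝ) :
    ∫ x : ℝ in (0)..t, exp (-s * x) = (1 - exp (-(t : ℂ) * s)) / s := by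
  rw [integral_exp_mul_complex (neg_ne_zero.2 hs), ofReal_zero, mul_zero, exp_zero,
    neg_mul_comm, mul_comm, div_neg, ← neg_div, neg_sub]

lemma norm_one_sub_exp_neg_ofReal_mul_div_le {s : ℂ} (hs : 0 ≤ s.re) {t : ℝ} (ht : 0 ≤ t) :
    ‖(1 - exp (-(t : ℂ) * s)) / s‖ ≤ t := by
  rcases eq_or_ne s 0 with rfl | hs0
  · simpa using ht
  rw [← integral_exp_neg_mul_ofReal hs0]
  calc _ ≤ 1 * |t - 0| := intervalIntegral.norm_integral_le_of_norm_le_const fun x hx => ?_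
    _ = t := by simp [abs_of_nonneg ht]
  rw [Set.uIoc_of_le ht] at hx
  simpa [mul_comm] using norm_exp_neg_ofReal_mul_le_one hs hx.1.le

lemma inv_re_nonneg {s : ℂ} (hs : 0 ≤ s.re) : 0 ≤ s⁻¹.re := by
  rw [inv_re]
  exact div_nonneg hs (normSq_nonneg s)

lemma star_mul_ofReal_mul_le {q B : ℝ} (hq : 0 ≤ q) {e : ℂ} (he : ‖e‖ ≤ B) :
    star e * q * e ≤ q * (B : ℂ) ^ 2 := by
  rw [mul_right_comm, star_def, conj_mul', mul_comm _ (q : ℂ)]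
  norm_cast
  gcongr

lemma star_mul_ofReal_mul_le_one {q : ℝ} (hq : 0 ≤ q) {e : ℂ} (he : ‖e‖ ≤ 1) :
    star e * q * e ≤ q := by
  simpa using star_mul_ofReal_mul_le hq (B := 1) (by simpa using he)

end Complex

namespace Matrix

variable {m n R : Type*}

lemma conjTranspose_fromRows_one_mul_fromBlocks_mul_fromRows_one [Fintype n] [DecidableEq n]
    [Ring R] [StarRing R] (Δ A B C D : Matrix n n R) :
    (fromRows (1 : Matrix n n R) Δ)ᴴ * fromBlocks A B C D * fromRows (1 : Matrix n n R) Δ =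
      A + B * Δ + Δᴴ * C + Δᴴ * D * Δ := by
  rw [conjTranspose_fromRows_eq_fromCols_conjTranspose, fromCols_mul_fromBlocks,
    fromCols_mul_fromRows]
  simp only [conjTranspose_one, Matrix.one_mul, Matrix.mul_one, Matrix.add_mul]
  abel

lemma fromBlocks_zero_mul_diagonal_sumElim_const [Fintype m] [Fintype n] [DecidableEq m]
    [DecidableEq n] [CommRing R]
    (P : Matrix m m R) (c : R) (g : n → R) :
    fromBlocks P 0 0 (0 : Matrix n n R) * diagonal (Sum.elim (fun _ => c) g) =
      fromBlocks (c • P) 0 0 0 := by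
  rw [← fromBlocks_diagonal, fromBlocks_multiply, ← smul_one_eq_diagonal]
  simp

lemma PosSemidef.fromBlocks_zero [Fintype m] [Fintype n] [DecidableEq m] [Ring R]
    [PartialOrder R] [StarRing R]
    {A : Matrix m m R} (hA : A.PosSemidef) : (fromBlocks A 0 0 (0 : Matrix n n R)).PosSemidef := by
  convert hA.mul_mul_conjTranspose_same (fromRows (1 : Matrix m m R) (0 : Matrix n m R)) using 1
  rw [conjTranspose_fromRows_eq_fromCols_conjTranspose, fromRows_mul, fromRows_mul_fromCols]
  simp

lemma PosSemidef.smul_add_conjTranspose_smul {P : Matrix n n ℂ} (hP : P.PosSemidef) {c : ℂ}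
    (hc : 0 ≤ c.re) : (c • P + (c • P)ᴴ).PosSemidef := by
  rw [conjTranspose_smul, hP.1.eq, ← add_smul, Complex.star_def, Complex.add_conj]
  exact hP.smul (Complex.zero_le_real.2 (by positivity))

lemma PosSemidef.neg_fromBlocks_neg_mul_diagonal_add_conjTranspose [Fintype m] [Fintype n]
    [DecidableEq m] [DecidableEq n]
    {P : Matrix m m ℂ} (hP : P.PosSemidef) {c : ℂ} (hc : 0 ≤ c.re) (g : n → ℂ) :
    (-(fromBlocks (-P) 0 0 0 * diagonal (Sum.elim (fun _ => c) g) +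
      (fromBlocks (-P) 0 0 0 * diagonal (Sum.elim (fun _ => c) g))ᴴ)).PosSemidef := by
  rw [fromBlocks_zero_mul_diagonal_sumElim_const, fromBlocks_conjTranspose, fromBlocks_add,
    fromBlocks_neg]
  simp only [smul_neg, conjTranspose_neg, conjTranspose_zero, add_zero, neg_add, neg_neg,
    neg_zero]
  exact (hP.smul_add_conjTranspose_smul hc).fromBlocks_zero

end Matrix

theorem dd_separator_negativity_general (N : ℕ)
    (s : ℂ) (hre : 0 ≤ s.re)
    (τf τb τ : Fin N → ℝ) (hτf : ∀ i, 0 ≤ τf i) (hτb : ∀ i, 0 ≤ τb i) (hτ : ∀ i, 0 ≤ τ i)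
    (P : Matrix (Fin (N + 1)) (Fin (N + 1)) ℂ) (hP : P.PosSemidef)
    (q0f q0b q0 q1f q1b q1 : Fin N → ℝ)
    (hq0f : ∀ i, 0 ≤ q0f i) (hq0b : ∀ i, 0 ≤ q0b i) (hq0 : ∀ i, 0 ≤ q0 i)
    (hq1f : ∀ i, 0 ≤ q1f i) (hq1b : ∀ i, 0 ≤ q1b i) (hq1 : ∀ i, 0 ≤ q1 i)
    (nab : Matrix (DdIdx N) (DdIdx N) ℂ)
    (hnab : nab = Matrix.diagonal (Sum.elim (fun _ => s⁻¹)
      (Sum.elim (fun i => Complex.exp (-(τf i : ℂ) * s))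
        (Sum.elim (fun i => Complex.exp (-(τb i : ℂ) * s))
          (Sum.elim (fun i => Complex.exp (-(τ i : ℂ) * s))
            (Sum.elim (fun i => (1 - Complex.exp (-(τf i : ℂ) * s)) / s)
              (Sum.elim (fun i => (1 - Complex.exp (-(τb i : ℂ) * s)) / s)
                (fun i => (1 - Complex.exp (-(τ i : ℂ) * s)) / s))))))))
    (Θ11 Θ12 Θ22 : Matrix (DdIdx N) (DdIdx N) ℂ)
    (hΘ11 : Θ11 = Matrix.diagonal (Sum.elim (fun _ => (0 : ℂ))
      (Sum.elim (fun i => -(q0f i : ℂ))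
        (Sum.elim (fun i => -(q0b i : ℂ))
          (Sum.elim (fun i => -(q0 i : ℂ))
            (Sum.elim (fun i => -((q1f i : ℂ) * (τf i : ℂ) ^ 2))
              (Sum.elim (fun i => -((q1b i : ℂ) * (τb i : ℂ) ^ 2))
                (fun i => -((q1 i : ℂ) * (τ i : ℂ) ^ 2)))))))))
    (hΘ12 : Θ12 = Matrix.fromBlocks (-P) 0 0 0)
    (hΘ22 : Θ22 = Matrix.diagonal (Sum.elim (fun _ => (0 : ℂ))
      (Sum.elim (fun i => (q0f i : ℂ))
        (Sum.elim (fun i => (q0b i : ℂ))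
          (Sum.elim (fun i => (q0 i : ℂ))
            (Sum.elim (fun i => (q1f i : ℂ))
              (Sum.elim (fun i => (q1b i : ℂ)) (fun i => (q1 i : ℂ)))))))))
    (Θ : Matrix (DdIdx N ⊕ DdIdx N) (DdIdx N ⊕ DdIdx N) ℂ)
    (hΘ : Θ = Matrix.fromBlocks Θ11 Θ12 Θ12ᴴ Θ22)
    (J : Matrix (DdIdx N ⊕ DdIdx N) (DdIdx N) ℂ)
    (hJ : J = Matrix.of fun k j =>
      Sum.elim (fun i => if i = j then (1 : ℂ) else 0) (fun i => nab i j) k) :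
    (-(Jᴴ * Θ * J)).PosSemidef := by
  have hJ' : J = fromRows 1 nab := by
    subst hJ
    ext (i | i) j <;> simp [one_apply]
  have hcross : (-(Θ12 * nab + (Θ12 * nab)ᴴ)).PosSemidef := by
    rw [hΘ12, hnab]
    exact hP.neg_fromBlocks_neg_mul_diagonal_add_conjTranspose (Complex.inv_re_nonneg hre) _
  have hdiag : (-Θ11 - nabᴴ * Θ22 * nab).PosSemidef := by
    open Complex in
    rw [hΘ11, hΘ22, hnab, diagonal_conjTranspose, diagonal_mul_diagonal, diagonal_mul_diagonal,
      diagonal_neg, diagonal_sub, posSemidef_diagonal_iff]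
    rintro (i | i | i | i | i | i | i) <;>
      simp only [Pi.star_apply, Sum.elim_inl, Sum.elim_inr, neg_neg, sub_nonneg]
    · simp
    · exact star_mul_ofReal_mul_le_one (hq0f i) (norm_exp_neg_ofReal_mul_le_one hre (hτf i))
    · exact star_mul_ofReal_mul_le_one (hq0b i) (norm_exp_neg_ofReal_mul_le_one hre (hτb i))
    · exact star_mul_ofReal_mul_le_one (hq0 i) (norm_exp_neg_ofReal_mul_le_one hre (hτ i))
    · exact star_mul_ofReal_mul_le (hq1f i) (norm_one_sub_exp_neg_ofReal_mul_div_le hre (hτf i))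
    · exact star_mul_ofReal_mul_le (hq1b i) (norm_one_sub_exp_neg_ofReal_mul_div_le hre (hτb i))
    · exact star_mul_ofReal_mul_le (hq1 i) (norm_one_sub_exp_neg_ofReal_mul_div_le hre (hτ i))
  rw [hΘ, hJ', conjTranspose_fromRows_one_mul_fromBlocks_mul_fromRows_one, ← conjTranspose_mul]
  convert hcross.add hdiag using 1
  abel

/-- The delay-dependent quadratic separator `Θ` of the TCP/AQM model satisfies the
uncertainty-side inequality: `[I; ∇]ᴴ Θ [I; ∇]` is negative semidefinite for the
augmented uncertainty `∇ = Diag(s⁻¹ I, 𝒟_{τᶠ}, 𝒟_{τᵇ}, 𝒟_τ, ℐ_{τᶠ}, ℐ_{τᵇ}, ℐ_τ)`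
at any nonzero point `s` of the closed right half-plane. -/
theorem dd_separator_negativity (N : ℕ) (hN : 1 ≤ N)
    (s : ℂ) (hs : s ≠ 0) (hre : 0 ≤ s.re)
    (τf τb τ : Fin N → ℝ) (hτf : ∀ i, 0 ≤ τf i) (hτb : ∀ i, 0 ≤ τb i) (hτ : ∀ i, 0 ≤ τ i)
    (P : Matrix (Fin (N + 1)) (Fin (N + 1)) ℂ) (hP : P.PosSemidef)
    (q0f q0b q0 q1f q1b q1 : Fin N → ℝ)
    (hq0f : ∀ i, 0 ≤ q0f i) (hq0b : ∀ i, 0 ≤ q0b i) (hq0 : ∀ i, 0 ≤ q0 i)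
    (hq1f : ∀ i, 0 ≤ q1f i) (hq1b : ∀ i, 0 ≤ q1b i) (hq1 : ∀ i, 0 ≤ q1 i)
    (nab : Matrix (DdIdx N) (DdIdx N) ℂ)
    (hnab : nab = Matrix.diagonal (Sum.elim (fun _ => s⁻¹)
      (Sum.elim (fun i => Complex.exp (-(τf i : ℂ) * s))
        (Sum.elim (fun i => Complex.exp (-(τb i : ℂ) * s))
          (Sum.elim (fun i => Complex.exp (-(τ i : ℂ) * s))
            (Sum.elim (fun i => (1 - Complex.exp (-(τf i : ℂ) * s)) / s)
              (Sum.elim (fun i => (1 - Complex.exp (-(τb i : ℂ) * s)) / s)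
                (fun i => (1 - Complex.exp (-(τ i : ℂ) * s)) / s))))))))
    (Θ11 Θ12 Θ22 : Matrix (DdIdx N) (DdIdx N) ℂ)
    (hΘ11 : Θ11 = Matrix.diagonal (Sum.elim (fun _ => (0 : ℂ))
      (Sum.elim (fun i => -(q0f i : ℂ))
        (Sum.elim (fun i => -(q0b i : ℂ))
          (Sum.elim (fun i => -(q0 i : ℂ))
            (Sum.elim (fun i => -((q1f i : ℂ) * (τf i : ℂ) ^ 2))
              (Sum.elim (fun i => -((q1b i : ℂ) * (τb i : ℂ) ^ 2))
                (fun i => -((q1 i : ℂ) * (τ i : ℂ) ^ 2)))))))))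
    (hΘ12 : Θ12 = Matrix.fromBlocks (-P) 0 0 0)
    (hΘ22 : Θ22 = Matrix.diagonal (Sum.elim (fun _ => (0 : ℂ))
      (Sum.elim (fun i => (q0f i : ℂ))
        (Sum.elim (fun i => (q0b i : ℂ))
          (Sum.elim (fun i => (q0 i : ℂ))
            (Sum.elim (fun i => (q1f i : ℂ))
              (Sum.elim (fun i => (q1b i : ℂ)) (fun i => (q1 i : ℂ)))))))))
    (Θ : Matrix (DdIdx N ⊕ DdIdx N) (DdIdx N ⊕ DdIdx N) ℂ)
    (hΘ : Θ = Matrix.fromBlocks Θ11 Θ12 Θ12ᴴ Θ22)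
    (J : Matrix (DdIdx N ⊕ DdIdx N) (DdIdx N) ℂ)
    (hJ : J = Matrix.of fun k j =>
      Sum.elim (fun i => if i = j then (1 : ℂ) else 0) (fun i => nab i j) k) :
    (-(Jᴴ * Θ * J)).PosSemidef :=
  dd_separator_negativity_general N s hre τf τb τ hτf hτb hτ P hP q0f q0b q0 q1f q1b q1 hq0f hq0b
    hq0 hq1f hq1b hq1 nab hnab Θ11 Θ12 Θ22 hΘ11 hΘ12 hΘ22 Θ hΘ J hJ
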